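/- Let (E, ℰ) be a measurable space equipped with a finite measure ν̃, let T > 0, let N ∈ ℕ, let 0 < t₁ < t₂ < ... < t_N ≤ T be jump times with marks u₁, ..., u_N ∈ E, and let ν : [0,T] × E → ℝ be a measurable function with 0 ≤ ν(s,u) ≤ 1 for all (s,u). Define, for t ∈ [0,T], ξ_t = (∏_{n : t_n ≤ t} ν(t_n, u_n)) · exp(∫₀ᵗ ∫_E (1 − ν(s,u)) ν̃(du) ds), and for each n define the left limit ξ_{t_n}⁻ = (∏_{m < n} ν(t_m, u_m)) · exp(∫₀^{t_n} ∫_E (1 − ν(s,u)) ν̃(du) ds). Then for every t ∈ [0,T], ξ_t = 1 + ∑_{n : t_n ≤ t} ξ_{t_n}⁻ · (ν(t_n, u_n) − 1) − ∫₀ᵗ ξ_s (∫_E (ν(s,u) − 1) ν̃(du)) ds. -/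

import Mathlib

/-!
Write `a(s) = ∫ (1 - ν(s, ·)) dν̃` and `G(t) = exp ∫₀ᵗ a`. Since `t ↦ ∫₀ᵗ a` is absolutely
continuous and `exp` is Lipschitz on its compact range, `G` is absolutely continuous with
`G' = a G` almost everywhere (Lebesgue differentiation), so `G y - G x = ∫ₓʸ a G`. Between jumps
`ξ` is a constant multiple of `G`, and a jump at `τ` with factor `c` multiplies it by `c`, i.e.
adds `ξ(τ⁻)(c - 1)`. Removing the latest jump gives an induction on the set of jumps.
-/

open MeasureTheory Set Filter

theorem LipschitzOnWith.comp_absolutelyContinuousOnInterval {X Y : Type*} [PseudoMetricSpace X]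
    [PseudoMetricSpace Y] {f : ℝ → X} {g : X → Y} {K : NNReal} {a b : ℝ}
    (hg : LipschitzOnWith K g (f '' uIcc a b)) (hf : AbsolutelyContinuousOnInterval f a b) :
    AbsolutelyContinuousOnInterval (g ∘ f) a b := by
  unfold AbsolutelyContinuousOnInterval at hf ⊢
  have hKf := hf.const_mul (K : ℝ)
  rw [mul_zero] at hKf
  refine squeeze_zero' (Eventually.of_forall fun _ => Finset.sum_nonneg fun _ _ => dist_nonneg)
    ?_ hKf
  filter_upwards [mem_inf_of_right (mem_principal_self _)] with E hE
  rw [Finset.mul_sum]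
  gcongr with i hi
  exact hg.dist_le_mul _ (mem_image_of_mem f (hE.1 i hi).1) _ (mem_image_of_mem f (hE.1 i hi).2)

theorem integral_mul_exp_integral {f : ℝ → ℝ} (hf : LocallyIntegrable f volume) (a b c : ℝ) :
    ∫ s in a..b, f s * Real.exp (∫ r in c..s, f r) =
      Real.exp (∫ r in c..b, f r) - Real.exp (∫ r in c..a, f r) := by
  set F := fun x => ∫ r in c..x, f r
  have hfi (x y : ℝ) : IntervalIntegrable f volume x y :=
    (hf.integrableOn_isCompact isCompact_uIcc).intervalIntegrable
  have hF_eq : F = fun x => (∫ r in c..a, f r) + ∫ r in a..x, f r := funext fun x =>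
    (intervalIntegral.integral_add_adjacent_intervals (hfi c a) (hfi a x)).symm
  have hF : AbsolutelyContinuousOnInterval F a b := by
    rw [hF_eq]
    exact (LipschitzWith.const' (K := 0) _).lipschitzOnWith.absolutelyContinuousOnInterval.add
      ((hfi a b).absolutelyContinuousOnInterval_intervalIntegral left_mem_uIcc)
  obtain ⟨K, hK⟩ := Real.contDiff_exp.locallyLipschitz.locallyLipschitzOn
    |>.exists_lipschitzOnWith_of_compact (isCompact_uIcc.image_of_continuousOn hF.continuousOn)
  refine Eq.trans ?_ (hK.comp_absolutelyContinuousOnInterval hF).integral_deriv_eq_sub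
  refine intervalIntegral.integral_congr_ae ?_
  filter_upwards [LocallyIntegrable.ae_hasDerivAt_integral hf] with x hx _
  rw [mul_comm]
  exact (hx c).exp.deriv.symm

theorem integrableOn_integral_of_abs_le {α E : Type*} [MeasurableSpace α] [MeasurableSpace E]
    {ρ : Measure α} {μ : Measure E} [IsFiniteMeasure μ] {φ : α → E → ℝ}
    (hφ : Measurable (Function.uncurry φ)) {S : Set α} (hSm : MeasurableSet S) (hS : ρ S < ⊤)
    {C : ℝ} (hC : ∀ s ∈ S, ∀ e, |φ s e| ≤ C) :
    IntegrableOn (fun s => ∫ e, φ s e ∂μ) S ρ :=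
  .of_bound hS hφ.stronglyMeasurable.integral_prod_right'.aestronglyMeasurable (C * μ.real univ)
    (ae_restrict_of_forall_mem hSm fun s hs =>
      norm_integral_le_of_norm_le_const (ae_of_all _ (hC s hs)))

section JumpProduct

open Finset

variable {ι : Type*} (τ c : ι → ℝ)

noncomputable def jumpProd (S : Finset ι) (t : ℝ) : ℝ := ∏ n ∈ S with τ n ≤ t, c n

noncomputable def jumpProdLeft (S : Finset ι) (t : ℝ) : ℝ := ∏ n ∈ S with τ n < t, c n

variable {τ c} {S : Finset ι} {a : ι} {t : ℝ}

theorem jumpProd_insert_of_lt [DecidableEq ι] (h : t < τ a) :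
    jumpProd τ c (insert a S) t = jumpProd τ c S t := by
  rw [jumpProd, filter_insert, if_neg (not_le.2 h), jumpProd]

theorem jumpProd_insert_of_le [DecidableEq ι] (ha : a ∉ S) (h : τ a ≤ t) :
    jumpProd τ c (insert a S) t = c a * jumpProd τ c S t := by
  rw [jumpProd, filter_insert, if_pos h, prod_insert (by simp [ha]), jumpProd]

theorem jumpProd_of_forall_le (h : ∀ n ∈ S, τ n ≤ t) : jumpProd τ c S t = ∏ n ∈ S, c n := by
  rw [jumpProd, filter_true_of_mem h]

theorem jumpProdLeft_insert_of_le [DecidableEq ι] (h : t ≤ τ a) :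
    jumpProdLeft τ c (insert a S) t = jumpProdLeft τ c S t := by
  rw [jumpProdLeft, filter_insert, if_neg (not_lt.2 h), jumpProdLeft]

theorem jumpProdLeft_of_forall_lt (h : ∀ n ∈ S, τ n < t) :
    jumpProdLeft τ c S t = ∏ n ∈ S, c n := by
  rw [jumpProdLeft, filter_true_of_mem h]

theorem measurable_jumpProd : Measurable (jumpProd τ c S) := by
  rw [show jumpProd τ c S = fun t => ∏ n ∈ S, if τ n ≤ t then c n else 1 from
    funext fun t => prod_filter _ _]
  exact Finset.measurable_prod _ fun n _ =>
    Measurable.ite measurableSet_Ici measurable_const measurable_const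

theorem abs_jumpProd_le : |jumpProd τ c S t| ≤ ∏ n ∈ S, max 1 |c n| := by
  rw [jumpProd, prod_filter, abs_prod]
  exact prod_le_prod (fun _ _ => abs_nonneg _) fun n _ => by split_ifs <;> simp

theorem IntervalIntegrable.jumpProd_mul {g : ℝ → ℝ} {x y : ℝ}
    (hg : IntervalIntegrable g volume x y) :
    IntervalIntegrable (fun s => jumpProd τ c S s * g s) volume x y :=
  intervalIntegrable_iff.2 <| (intervalIntegrable_iff.1 hg).bdd_mul
    measurable_jumpProd.aestronglyMeasurable (ae_of_all _ fun _ => abs_jumpProd_le)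

theorem jumpProd_mul_eq {G g : ℝ → ℝ} (hG : ∀ x y, ∫ s in x..y, g s = G y - G x)
    (hg : ∀ x y, IntervalIntegrable g volume x y) (hτ : Set.InjOn τ S) {t₀ : ℝ}
    (hS : ∀ n ∈ S, t₀ ≤ τ n) (ht : t₀ ≤ t) :
    jumpProd τ c S t * G t = G t₀ +
      ∑ n ∈ S with τ n ≤ t, jumpProdLeft τ c S (τ n) * G (τ n) * (c n - 1) +
      ∫ s in t₀..t, jumpProd τ c S s * g s := by
  classical
  induction S using Finset.induction_on_max_value τ generalizing t with
  | empty => simp [jumpProd, hG]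
  | insert a S ha hmax ih =>
    have hlt : ∀ n ∈ S, τ n < τ a := fun n hn => (hmax n hn).lt_of_ne fun h =>
      ha (hτ (mem_insert_of_mem hn) (mem_insert_self a S) h ▸ hn)
    have ih' {t : ℝ} := @ih t (hτ.mono (by simp)) (fun n hn => hS n (mem_insert_of_mem hn))
    have hleft_sum (t : ℝ) :
        ∑ n ∈ S with τ n ≤ t, jumpProdLeft τ c (insert a S) (τ n) * G (τ n) * (c n - 1) =
          ∑ n ∈ S with τ n ≤ t, jumpProdLeft τ c S (τ n) * G (τ n) * (c n - 1) :=
      sum_congr rfl fun n hn => by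
        rw [jumpProdLeft_insert_of_le (hlt n (mem_filter.1 hn).1).le]
    rcases lt_or_ge t (τ a) with hta | hat
    · rw [jumpProd_insert_of_lt hta, filter_insert, if_neg (not_le.2 hta), hleft_sum, ih' ht]
      congr 1
      refine intervalIntegral.integral_congr fun s hs => ?_
      rw [jumpProd_insert_of_lt ((uIcc_of_le ht ▸ hs).2.trans_lt hta)]
    · have hafter (s : ℝ) (hs : τ a ≤ s) :
          jumpProd τ c (insert a S) s = c a * ∏ n ∈ S, c n := by
        rw [jumpProd_insert_of_le ha hs, jumpProd_of_forall_le fun n hn => (hlt n hn).le.trans hs]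
      have hbefore : ∫ s in t₀..τ a, jumpProd τ c (insert a S) s * g s =
          ∫ s in t₀..τ a, jumpProd τ c S s * g s :=
        intervalIntegral.integral_congr_uIoo fun s hs => by
          rw [jumpProd_insert_of_lt ((uIoo_of_le (hS a (mem_insert_self a S)) ▸ hs).2)]
      have hjump : ∫ s in τ a..t, jumpProd τ c (insert a S) s * g s =
          (c a * ∏ n ∈ S, c n) * (G t - G (τ a)) := by
        rw [← hG, ← intervalIntegral.integral_const_mul]
        exact intervalIntegral.integral_congr fun s hs => by
          rw [hafter s (uIcc_of_le hat ▸ hs).1]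
      have hjumps : S.filter (τ · ≤ t) = S.filter (τ · ≤ τ a) := by
        rw [filter_true_of_mem fun n hn => (hlt n hn).le.trans hat,
          filter_true_of_mem fun n hn => (hlt n hn).le]
      have ih_a := ih' (hS a (mem_insert_self a S))
      rw [jumpProd_of_forall_le fun n hn => (hlt n hn).le] at ih_a
      rw [← intervalIntegral.integral_add_adjacent_intervals (hg _ _).jumpProd_mul
          (hg _ _).jumpProd_mul, hbefore, hjump, hafter t hat, filter_insert, if_pos hat,
        sum_insert (by simp [ha]), jumpProdLeft_insert_of_le le_rfl, jumpProdLeft_of_forall_lt hlt,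
        hleft_sum, hjumps]
      linear_combination ih_a

end JumpProduct

theorem doleans_dade_product_integral_equation_general
    {E : Type*} [MeasurableSpace E] (μ : Measure E) [IsFiniteMeasure μ]
    (T : ℝ) (N : ℕ)
    (tj : Fin N → ℝ) (htj_mono : StrictMono tj)
    (htj_pos : ∀ n, 0 < tj n)
    (u : Fin N → E)
    (ν : ℝ → E → ℝ) (hν_meas : Measurable (Function.uncurry ν))
    (hν01 : ∀ s ∈ Icc (0 : ℝ) T, ∀ e : E, ν s e ∈ Icc (0 : ℝ) 1)
    (ξ : ℝ → ℝ)
    (hξ : ∀ t ∈ Icc (0 : ℝ) T,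
      ξ t = (∏ n ∈ Finset.univ.filter (fun n => tj n ≤ t), ν (tj n) (u n)) *
        Real.exp (∫ s in (0 : ℝ)..t, ∫ e, (1 - ν s e) ∂μ))
    (ξm : Fin N → ℝ)
    (hξm : ∀ n : Fin N,
      ξm n = (∏ m ∈ Finset.univ.filter (fun m => m < n), ν (tj m) (u m)) *
        Real.exp (∫ s in (0 : ℝ)..(tj n), ∫ e, (1 - ν s e) ∂μ)) :
    ∀ t ∈ Icc (0 : ℝ) T,
      ξ t = 1 + (∑ n ∈ Finset.univ.filter (fun n => tj n ≤ t),
          ξm n * (ν (tj n) (u n) - 1))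
        - ∫ s in (0 : ℝ)..t, ξ s * (∫ e, (ν s e - 1) ∂μ) := by
  intro t ht
  set a : ℝ → ℝ := fun s => ∫ e, (1 - ν s e) ∂μ
  -- Outside `[0, T]` nothing is assumed on `ν`, so the drift is cut off there.
  set f := (Icc 0 T).indicator a
  have hf : LocallyIntegrable f volume :=
    ((integrableOn_integral_of_abs_le (φ := fun s e => 1 - ν s e) (hν_meas.const_sub 1)
      measurableSet_Icc measure_Icc_lt_top (C := 1) fun s hs e => abs_le.2
        ⟨by linarith [(hν01 s hs e).2], by linarith [(hν01 s hs e).1]⟩).integrable_indicator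
      measurableSet_Icc).locallyIntegrable
  have hfi (x y : ℝ) : IntervalIntegrable f volume x y :=
    (hf.integrableOn_isCompact isCompact_uIcc).intervalIntegrable
  have hfa {s : ℝ} (hs : s ∈ Icc 0 t) : f s = a s :=
    indicator_of_mem (show s ∈ Icc 0 T from ⟨hs.1, hs.2.trans ht.2⟩) a
  have hint {x : ℝ} (hx : x ∈ Icc 0 t) : ∫ s in 0..x, a s = ∫ s in 0..x, f s :=
    intervalIntegral.integral_congr fun s hs =>
      (hfa ⟨(uIcc_of_le hx.1 ▸ hs).1, (uIcc_of_le hx.1 ▸ hs).2.trans hx.2⟩).symm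
  set G : ℝ → ℝ := fun x => Real.exp (∫ s in 0..x, f s)
  set c : Fin N → ℝ := fun n => ν (tj n) (u n)
  have hξ' {s : ℝ} (hs : s ∈ Icc 0 t) : ξ s = jumpProd tj c Finset.univ s * G s := by
    rw [hξ s ⟨hs.1, hs.2.trans ht.2⟩, hint hs]
    rfl
  have hξm' {n : Fin N} (hn : tj n ≤ t) :
      ξm n = jumpProdLeft tj c Finset.univ (tj n) * G (tj n) := by
    rw [hξm, hint ⟨(htj_pos n).le, hn⟩, jumpProdLeft]
    simp_rw [htj_mono.lt_iff_lt]
    rfl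
  have hdrift {s : ℝ} (hs : s ∈ Icc 0 t) : ∫ e, (ν s e - 1) ∂μ = -f s := by
    rw [hfa hs, ← integral_neg]
    simp_rw [neg_sub]
  have key := jumpProd_mul_eq (τ := tj) (c := c) (S := Finset.univ) (G := G)
    (fun x y => integral_mul_exp_integral hf x y 0)
    (fun x y => (hfi x y).mul_continuousOn
      (intervalIntegral.continuous_primitive hfi 0).rexp.continuousOn)
    htj_mono.injective.injOn (fun n _ => (htj_pos n).le) ht.1
  rw [Finset.sum_congr rfl fun n hn => by rw [hξm' (Finset.mem_filter.1 hn).2],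
    intervalIntegral.integral_congr (g := fun s => -(jumpProd tj c Finset.univ s * (f s * G s)))
      fun s hs => by rw [hξ' (uIcc_of_le ht.1 ▸ hs), hdrift (uIcc_of_le ht.1 ▸ hs)]; ring,
    intervalIntegral.integral_neg, sub_neg_eq_add, hξ' ⟨ht.1, le_rfl⟩, key]
  simp [G, c]

/-- Pathwise equivalence between the Doléans–Dade product formula and the
stochastic-exponential (jump-plus-drift) integral equation, for a path with
finitely many jump times `t₁ < ⋯ < t_N` with marks `u₁, …, u_N`. -/
theorem doleans_dade_product_integral_equation
    {E : Type*} [MeasurableSpace E] (μ : Measure E) [IsFiniteMeasure μ]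
    (T : ℝ) (hT : 0 < T) (N : ℕ)
    (tj : Fin N → ℝ) (htj_mono : StrictMono tj)
    (htj_pos : ∀ n, 0 < tj n) (htj_le : ∀ n, tj n ≤ T)
    (u : Fin N → E)
    (ν : ℝ → E → ℝ) (hν_meas : Measurable (Function.uncurry ν))
    (hν01 : ∀ s ∈ Icc (0 : ℝ) T, ∀ e : E, ν s e ∈ Icc (0 : ℝ) 1)
    (ξ : ℝ → ℝ)
    (hξ : ∀ t ∈ Icc (0 : ℝ) T,
      ξ t = (∏ n ∈ Finset.univ.filter (fun n => tj n ≤ t), ν (tj n) (u n)) *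
        Real.exp (∫ s in (0 : ℝ)..t, ∫ e, (1 - ν s e) ∂μ))
    (ξm : Fin N → ℝ)
    (hξm : ∀ n : Fin N,
      ξm n = (∏ m ∈ Finset.univ.filter (fun m => m < n), ν (tj m) (u m)) *
        Real.exp (∫ s in (0 : ℝ)..(tj n), ∫ e, (1 - ν s e) ∂μ)) :
    ∀ t ∈ Icc (0 : ℝ) T,
      ξ t = 1 + (∑ n ∈ Finset.univ.filter (fun n => tj n ≤ t),
          ξm n * (ν (tj n) (u n) - 1))
        - ∫ s in (0 : ℝ)..t, ξ s * (∫ e, (ν s e - 1) ∂μ) :=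
  doleans_dade_product_integral_equation_general μ T N tj htj_mono htj_pos u ν hν_meas hν01 ξ hξ ξm
    hξm
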